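/- arXiv:2205.05138 — 3 statements merged into one kernel-verified Lean document; each statement's English description precedes it below -/
import Mathlib

section
/- (Theorem 1, probabilistic core via union bound.) Let 0 < α < β < 1, N ≥ 1 and n ≥ 1. Let (X_{m,i}) for m = 1, …, n and i = 1, …, N be independent identically distributed real-valued random variables, and let q_β ∈ ℝ satisfy P(X_{1,1} ≤ q_β) ≥ β. Then the probability that there exists some batch m ∈ {1, …, n} with q_β < q̂_α(X_{m,1},…,X_{m,N}) is at most n·exp(−2N(β − α)²). -/
open Finset MeasureTheory ProbabilityTheory

/-!
On the event `q_β < q̂_α` for some batch, fewer than `α N` of that batch's returns are at most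
`q_β`. That count is a sum of `N` independent indicators with means at least `β`, so
Hoeffding's inequality bounds the probability of the event by `exp (-2 N (β - α)²)`; a union
bound over the `n` batches gives the factor `n`.
-/

/-- The empirical `α`-quantile of the sample `R₁, …, R_N`:
`q̂_α(R) = min {q : ℝ | #{i : Rᵢ ≤ q} ≥ α·N}`. -/
noncomputable def empQuantile (N : ℕ) (α : ℝ) (R : Fin N → ℝ) : ℝ :=
  sInf {q : ℝ | α * N ≤ (univ.filter fun i => R i ≤ q).card}

theorem card_lt_of_lt_empQuantile {N : ℕ} {α q : ℝ} (hα : 0 < α) (hN : 0 < N)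
    {R : Fin N → ℝ} (hq : q < empQuantile N α R) : (#{i | R i ≤ q} : ℝ) < α * N := by
  have hbdd : BddBelow {q : ℝ | α * N ≤ #{i | R i ≤ q}} := by
    refine ⟨⨅ i, R i, fun q' hq' => ?_⟩
    obtain ⟨i, hi⟩ : ({i | R i ≤ q'} : Finset (Fin N)).Nonempty := by
      rw [← card_pos]
      exact_mod_cast (by positivity : (0 : ℝ) < α * N).trans_le hq'
    exact (ciInf_le (Finite.bddBelow_range R) i).trans (mem_filter.1 hi).2
  by_contra! h
  exact (csInf_le hbdd h).not_gt hq

theorem ProbabilityTheory.iIndepFun.row {Ω : Type*} [MeasurableSpace Ω] {μ : Measure Ω}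
    {κ ι E : Type*} [MeasurableSpace E] {X : κ → ι → Ω → E} (hindep : iIndepFun (fun p : κ × ι => X p.1 p.2) μ) (m : κ) :
    iIndepFun (X m) μ :=
  hindep.precomp (g := Prod.mk m) (Prod.mk_right_injective m)

theorem measureReal_sum_le_le_exp_of_mem_Icc_zero_one
    {Ω : Type*} [MeasurableSpace Ω] {μ : Measure Ω} [IsProbabilityMeasure μ]
    {ι : Type*} [Fintype ι] {Y : ι → Ω → ℝ}
    (hindep : iIndepFun Y μ) (hmeas : ∀ i, AEMeasurable (Y i) μ)
    (hY : ∀ i, ∀ᵐ ω ∂μ, Y i ω ∈ Set.Icc 0 1) {α β : ℝ} (hαβ : α ≤ β)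
    (hmean : ∀ i, β ≤ μ[Y i]) :
    μ.real {ω | ∑ i, Y i ω ≤ α * Fintype.card ι} ≤
      Real.exp (-2 * Fintype.card ι * (β - α) ^ 2) := by
  have hsubG : ∀ i ∈ (univ : Finset ι),
      HasSubgaussianMGF (fun ω => μ[Y i] - Y i ω) (1 / 4) μ := by
    intro i _
    convert (hasSubgaussianMGF_of_mem_Icc (hmeas i) (hY i)).neg using 1
    · ext ω; simp
    · norm_num
  have hindep' : iIndepFun (fun i ω => μ[Y i] - Y i ω) μ :=
    hindep.comp (fun i r => ∫ ω, Y i ω ∂μ - r) fun _ => by fun_prop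
  have hsum_mean : Fintype.card ι * β ≤ ∑ i, μ[Y i] := by
    simpa [mul_comm] using card_nsmul_le_sum univ (fun i => μ[Y i]) β fun i _ => hmean i
  calc μ.real {ω | ∑ i, Y i ω ≤ α * Fintype.card ι}
      ≤ μ.real {ω | Fintype.card ι * (β - α) ≤ ∑ i, (μ[Y i] - Y i ω)} := by
        refine measureReal_mono fun ω hω => ?_
        simp only [Set.mem_ofPred_eq, sum_sub_distrib] at hω ⊢
        linarith
    _ ≤ Real.exp (-(Fintype.card ι * (β - α)) ^ 2 / (2 * ∑ _i : ι, (1 / 4 : NNReal))) :=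
        HasSubgaussianMGF.measure_sum_ge_le_of_iIndepFun hindep' hsubG (by positivity)
    _ = Real.exp (-2 * Fintype.card ι * (β - α) ^ 2) := by
      rw [sum_const, card_univ, nsmul_eq_mul]
      push_cast
      generalize (Fintype.card ι : ℝ) = N
      rcases eq_or_ne N 0 with rfl | hN
      · simp
      · congr 1
        field_simp
        ring

theorem measureReal_card_le_le_exp
    {Ω : Type*} [MeasurableSpace Ω] {μ : Measure Ω} [IsProbabilityMeasure μ]
    {ι : Type*} [Fintype ι] {X : ι → Ω → ℝ}
    (hindep : iIndepFun X μ) (hmeas : ∀ i, Measurable (X i)) {α β q : ℝ} (hαβ : α ≤ β)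
    (hq : ∀ i, β ≤ μ.real {ω | X i ω ≤ q}) :
    μ.real {ω | (#{i | X i ω ≤ q} : ℝ) ≤ α * Fintype.card ι} ≤
      Real.exp (-2 * Fintype.card ι * (β - α) ^ 2) := by
  let Y i := (Set.Iic q).indicator (1 : ℝ → ℝ) ∘ X i
  have hY_eq : ∀ i, Y i = (X i ⁻¹' Set.Iic q).indicator 1 := fun i => by
    ext ω; exact (Set.indicator_comp_right (X i)).symm
  have hhoeffding := measureReal_sum_le_le_exp_of_mem_Icc_zero_one (Y := Y)
    (hindep.comp _ fun _ => measurable_one.indicator measurableSet_Iic)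
    (fun i => ((measurable_one.indicator measurableSet_Iic).comp (hmeas i)).aemeasurable)
    (fun i => ae_of_all _ fun ω => by by_cases h : X i ω ≤ q <;> simp [Y, h])
    hαβ (fun i => by rw [hY_eq, integral_indicator_one (hmeas i measurableSet_Iic)]; exact hq i)
  convert hhoeffding using 5 with ω
  simp [Y, Set.indicator_apply, sum_boole]

theorem measure_lt_empQuantile_le_exp
    {Ω : Type*} [MeasurableSpace Ω] {μ : Measure Ω} [IsProbabilityMeasure μ]
    {α β q : ℝ} (hα : 0 < α) (hαβ : α ≤ β) {N : ℕ} (hN : 0 < N) {X : Fin N → Ω → ℝ}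
    (hindep : iIndepFun X μ) (hmeas : ∀ i, Measurable (X i))
    (hq : ∀ i, ENNReal.ofReal β ≤ μ {ω | X i ω ≤ q}) :
    μ {ω | q < empQuantile N α (fun i => X i ω)} ≤
      ENNReal.ofReal (Real.exp (-2 * N * (β - α) ^ 2)) := by
  have hhoeffding := measureReal_card_le_le_exp hindep hmeas hαβ
    fun i => (ENNReal.ofReal_le_iff_le_toReal (measure_ne_top _ _)).1 (hq i)
  rw [Fintype.card_fin] at hhoeffding
  calc μ {ω | q < empQuantile N α (fun i => X i ω)}
      ≤ μ {ω | (#{i | X i ω ≤ q} : ℝ) ≤ α * N} :=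
        measure_mono fun ω hω => (card_lt_of_lt_empQuantile hα hN hω).le
    _ ≤ _ := by rw [← ofReal_measureReal]; exact ENNReal.ofReal_le_ofReal hhoeffding

theorem blindness_union_bound_general
    {Ω : Type*} [MeasurableSpace Ω] (P : Measure Ω) [IsProbabilityMeasure P]
    {α β : ℝ} (hα : 0 < α) (hαβ : α < β)
    {N n : ℕ} (hN : 1 ≤ N)
    (X : Fin n → Fin N → Ω → ℝ) (hmeas : ∀ m i, Measurable (X m i))
    (hindep : iIndepFun
      (fun p : Fin n × Fin N => X p.1 p.2) P)
    (qβ : ℝ) (hq : ∀ m i, ENNReal.ofReal β ≤ P {ω | X m i ω ≤ qβ}) :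
    P {ω | ∃ m, qβ < empQuantile N α (fun i => X m i ω)} ≤
      ENNReal.ofReal (n * Real.exp (-2 * N * (β - α) ^ 2)) := by
  calc P {ω | ∃ m, qβ < empQuantile N α (fun i => X m i ω)}
      ≤ ∑ m, P {ω | qβ < empQuantile N α (fun i => X m i ω)} := by
        rw [Set.ofPred_exists]; exact measure_iUnion_fintype_le P _
    _ ≤ ∑ _m : Fin n, ENNReal.ofReal (Real.exp (-2 * N * (β - α) ^ 2)) :=
        sum_le_sum fun m _ =>
          measure_lt_empQuantile_le_exp hα hαβ.le hN (hindep.row m) (hmeas m) (hq m)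
    _ = ENNReal.ofReal (n * Real.exp (-2 * N * (β - α) ^ 2)) := by
        rw [sum_const, card_univ, Fintype.card_fin, nsmul_eq_mul,
          ENNReal.ofReal_mul n.cast_nonneg, ENNReal.ofReal_natCast]

/-- **Theorem 1, probabilistic core via union bound.** Let `0 < α < β < 1`, `N ≥ 1`
and `n ≥ 1`. Let `(X_{m,i})`, `m = 1, …, n`, `i = 1, …, N`, be i.i.d. real-valued
random variables, and let `q_β ∈ ℝ` satisfy `P(X_{1,1} ≤ q_β) ≥ β`. Then the
probability that some batch `m` has `q_β < q̂_α(X_{m,1},…,X_{m,N})` is at most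
`n·exp (-2N(β - α)²)`. -/
theorem blindness_union_bound
    {Ω : Type*} [MeasurableSpace Ω] (P : Measure Ω) [IsProbabilityMeasure P]
    {α β : ℝ} (hα : 0 < α) (hαβ : α < β) (hβ : β < 1)
    {N n : ℕ} (hN : 1 ≤ N) (hn : 1 ≤ n)
    (X : Fin n → Fin N → Ω → ℝ) (hmeas : ∀ m i, Measurable (X m i))
    (hindep : iIndepFun
      (fun p : Fin n × Fin N => X p.1 p.2) P)
    (hident : ∀ m i m' i',
      Measure.map (X m i) P = Measure.map (X m' i') P)
    (qβ : ℝ) (hq : ∀ m i, ENNReal.ofReal β ≤ P {ω | X m i ω ≤ qβ}) :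
    P {ω | ∃ m, qβ < empQuantile N α (fun i => X m i ω)} ≤
      ENNReal.ofReal (n * Real.exp (-2 * N * (β - α) ^ 2)) :=
  blindness_union_bound_general P hα hαβ hN X hmeas hindep qβ hq
end

section
/- (Proposition 1, single-sample variance reduction.) Let μ be a probability measure on a measurable space Ω, let A ⊆ Ω be measurable with μ(A) = α for some α ∈ (0,1], and let ν = α⁻¹·(μ restricted to A), which is a probability measure. Let H : Ω → ℝ be square-integrable with respect to μ and satisfy H(x) = 0 for every x ∉ A. Then Var_ν(α·H) ≤ α·Var_μ(H), where Var_ρ(f) = ∫ f² dρ − (∫ f dρ)² denotes the variance of f under the probability measure ρ. -/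
open MeasureTheory

/-! The sampling distribution `ν = α⁻¹ • μ|_A` is the conditional measure `μ[|A]`. Since `H` vanishes
off `A`, integrating a multiple of `H` or `H²` against `μ[|A]` is `α⁻¹` times integrating it against
`μ`. Hence the weighted estimator is unbiased, `E_ν[αH] = E_μ[H]`, while its second moment shrinks
to `E_ν[(αH)²] = α E_μ[H²]`, so `Var_ν(αH) = α E_μ[H²] - E_μ[H]² ≤ α Var_μ(H)` because `α ≤ 1`. -/

namespace ProbabilityTheory

theorem integral_cond_of_forall_compl_eq_zero {Ω : Type*} [MeasurableSpace Ω] (μ : Measure Ω)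
    {s : Set Ω} {f : Ω → ℝ} (hf : ∀ x ∉ s, f x = 0) :
    ∫ x, f x ∂μ[|s] = (μ.real s)⁻¹ * ∫ x, f x ∂μ := by
  rw [cond, integral_smul_measure, setIntegral_eq_integral_of_forall_compl_eq_zero hf,
    ENNReal.toReal_inv, smul_eq_mul, measureReal_def]

end ProbabilityTheory

open ProbabilityTheory

theorem variance_reduction_tail_sampling_general
    {Ω : Type*} [MeasurableSpace Ω] (μ : Measure Ω) [IsProbabilityMeasure μ]
    {A : Set Ω} {α : ℝ} (hα : α ∈ Set.Ioc (0 : ℝ) 1)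
    (hμA : μ A = ENNReal.ofReal α)
    (H : Ω → ℝ) (hH0 : ∀ x ∉ A, H x = 0) :
    IsProbabilityMeasure ((ENNReal.ofReal α)⁻¹ • μ.restrict A) ∧
    (∫ x, (α * H x) ^ 2 ∂((ENNReal.ofReal α)⁻¹ • μ.restrict A)) -
        (∫ x, α * H x ∂((ENNReal.ofReal α)⁻¹ • μ.restrict A)) ^ 2 ≤
      α * ((∫ x, H x ^ 2 ∂μ) - (∫ x, H x ∂μ) ^ 2) := by
  obtain ⟨hα0, hα1⟩ := hα
  have hν : (ENNReal.ofReal α)⁻¹ • μ.restrict A = μ[|A] := by rw [ProbabilityTheory.cond, hμA]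
  have hμA_real : μ.real A = α := by rw [measureReal_def, hμA, ENNReal.toReal_ofReal hα0.le]
  have second_moment : ∫ x, (α * H x) ^ 2 ∂μ[|A] = α * ∫ x, H x ^ 2 ∂μ := by
    rw [integral_cond_of_forall_compl_eq_zero μ fun x hx => by simp [hH0 x hx], hμA_real]
    simp_rw [mul_pow]
    rw [integral_const_mul]
    field_simp
  have unbiased : ∫ x, α * H x ∂μ[|A] = ∫ x, H x ∂μ := by
    rw [integral_cond_of_forall_compl_eq_zero μ fun x hx => by simp [hH0 x hx], hμA_real,
      integral_const_mul, inv_mul_cancel_left₀ hα0.ne']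
  rw [hν, second_moment, unbiased]
  refine ⟨cond_isProbabilityMeasure (by simp [hμA, hα0]), ?_⟩
  nlinarith [sq_nonneg (∫ x, H x ∂μ)]

/-- **Proposition 1 (single-sample variance reduction).** Let `μ` be a probability
measure, `A` measurable with `μ(A) = α`, `α ∈ (0,1]`, and let
`ν = α⁻¹·(μ restricted to A)`, which is a probability measure. If `H` is
square-integrable w.r.t. `μ` and vanishes outside `A`, then
`Var_ν(α·H) ≤ α·Var_μ(H)`, where `Var_ρ(f) = ∫ f² dρ - (∫ f dρ)²`. -/
theorem variance_reduction_tail_sampling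
    {Ω : Type*} [MeasurableSpace Ω] (μ : Measure Ω) [IsProbabilityMeasure μ]
    {A : Set Ω} (hA : MeasurableSet A) {α : ℝ} (hα : α ∈ Set.Ioc (0 : ℝ) 1)
    (hμA : μ A = ENNReal.ofReal α)
    (H : Ω → ℝ) (hH : MemLp H 2 μ) (hH0 : ∀ x ∉ A, H x = 0) :
    IsProbabilityMeasure ((ENNReal.ofReal α)⁻¹ • μ.restrict A) ∧
    (∫ x, (α * H x) ^ 2 ∂((ENNReal.ofReal α)⁻¹ • μ.restrict A)) -
        (∫ x, α * H x ∂((ENNReal.ofReal α)⁻¹ • μ.restrict A)) ^ 2 ≤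
      α * ((∫ x, H x ^ 2 ∂μ) - (∫ x, H x ∂μ) ^ 2) :=
  variance_reduction_tail_sampling_general μ hα hμA H hH0
end

section
/- (Proposition 1, N-sample form.) Let μ be a probability measure on a measurable space Ω, let A ⊆ Ω be measurable with μ(A) = α for some α ∈ (0,1], and let ν = α⁻¹·(μ restricted to A), which is a probability measure. Let H : Ω → ℝ be square-integrable with respect to μ and satisfy H(x) = 0 for every x ∉ A. Let N ≥ 1, and consider N i.i.d. samples. Then the variance under the product measure ν^⊗N of the estimator (x₁,…,x_N) ↦ (1/N)·∑_{i=1}^N α·H(xᵢ) is at most α times the variance under μ^⊗N of the estimator (x₁,…,x_N) ↦ (1/N)·∑_{i=1}^N H(xᵢ). -/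
/-!
Under a product measure the coordinates are independent, so the variance of the empirical mean of
`N` samples is the one-sample variance divided by `N`, and it suffices to compare one-sample
variances. Since `H` vanishes off `A`, the integrals of `H` and `H²` against `ν` are `α⁻¹` times
those against `μ`, whence `Var_ν(α H) = α 𝔼_μ[H²] - (𝔼_μ H)² ≤ α Var_μ(H)` because `α ≤ 1`.
-/

open MeasureTheory ProbabilityTheory

section SampleMean

variable {Ω : Type*} [MeasurableSpace Ω] (ρ : Measure Ω) [IsProbabilityMeasure ρ]
  {f : Ω → ℝ} (N : ℕ)

lemma memLp_pi_sampleMean (hf : MemLp f 2 ρ) :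
    MemLp (fun x : Fin N → Ω => (1 / N) * ∑ i, f (x i)) 2 (Measure.pi fun _ => ρ) :=
  (memLp_finsetSum _ fun i _ =>
    hf.comp_measurePreserving (measurePreserving_eval (fun _ => ρ) i)).const_mul _

lemma variance_pi_sampleMean (hf : MemLp f 2 ρ) :
    Var[fun x : Fin N → Ω => (1 / N) * ∑ i, f (x i); Measure.pi fun _ => ρ] = Var[f; ρ] / N := by
  have hsum : Var[fun x : Fin N → Ω => ∑ i, f (x i); Measure.pi fun _ => ρ] = N * Var[f; ρ] := by
    simpa [← Finset.sum_fn] using variance_sum_pi (μ := fun _ : Fin N => ρ) fun _ => hf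
  rw [variance_const_mul, hsum]
  rcases N.eq_zero_or_pos with rfl | hN
  · simp
  · field_simp

lemma integral_sq_sub_sq_integral_pi_sampleMean (hf : MemLp f 2 ρ) :
    (∫ x, ((1 / N) * ∑ i : Fin N, f (x i)) ^ 2 ∂(Measure.pi fun _ => ρ)) -
        (∫ x, (1 / N) * ∑ i : Fin N, f (x i) ∂(Measure.pi fun _ => ρ)) ^ 2 =
      Var[f; ρ] / N := by
  rw [← variance_pi_sampleMean ρ N hf, variance_eq_sub (memLp_pi_sampleMean ρ N hf)]
  rfl

end SampleMean

lemma integral_inv_smul_restrict_of_forall_compl_eq_zero {Ω : Type*} [MeasurableSpace Ω]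
    (μ : Measure Ω) (A : Set Ω) {c : ℝ} (hc : 0 ≤ c) {g : Ω → ℝ} (hg : ∀ x ∉ A, g x = 0) :
    ∫ x, g x ∂((ENNReal.ofReal c)⁻¹ • μ.restrict A) = c⁻¹ * ∫ x, g x ∂μ := by
  rw [integral_smul_measure, ENNReal.toReal_inv, ENNReal.toReal_ofReal hc,
    setIntegral_eq_integral_of_forall_compl_eq_zero hg, smul_eq_mul]

lemma MeasureTheory.MemLp.inv_smul_restrict {Ω : Type*} [MeasurableSpace Ω] {μ : Measure Ω}
    {p : ENNReal} {g : Ω → ℝ} (hg : MemLp g p μ) (A : Set Ω) {c : ℝ} (hc : 0 < c) :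
    MemLp g p ((ENNReal.ofReal c)⁻¹ • μ.restrict A) :=
  (hg.restrict A).smul_measure (by simpa using hc)

lemma variance_const_mul_le_of_eq_inv_smul_restrict {Ω : Type*} [MeasurableSpace Ω]
    (μ : Measure Ω) [IsProbabilityMeasure μ] {A : Set Ω} {α : ℝ} (hα : α ∈ Set.Ioc (0 : ℝ) 1)
    (ν : Measure Ω) [IsProbabilityMeasure ν] (hν : ν = (ENNReal.ofReal α)⁻¹ • μ.restrict A)
    {H : Ω → ℝ} (hH : MemLp H 2 μ) (hH0 : ∀ x ∉ A, H x = 0) :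
    Var[fun x => α * H x; ν] ≤ α * Var[H; μ] := by
  obtain ⟨hα0, hα1⟩ := hα
  have hHν : MemLp H 2 ν := hν ▸ hH.inv_smul_restrict A hα0
  have hmean : ν[H] = α⁻¹ * μ[H] := by
    rw [hν, integral_inv_smul_restrict_of_forall_compl_eq_zero μ A hα0.le hH0]
  have hsq : ν[H ^ 2] = α⁻¹ * μ[H ^ 2] := by
    rw [hν, integral_inv_smul_restrict_of_forall_compl_eq_zero μ A hα0.le]
    intro x hx
    simp [hH0 x hx]
  calc Var[fun x => α * H x; ν]
      = α ^ 2 * (α⁻¹ * μ[H ^ 2] - (α⁻¹ * μ[H]) ^ 2) := by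
        rw [variance_const_mul, variance_eq_sub hHν, hmean, hsq]
    _ = α * μ[H ^ 2] - μ[H] ^ 2 := by field_simp
    _ ≤ α * (μ[H ^ 2] - μ[H] ^ 2) := by nlinarith [sq_nonneg μ[H]]
    _ = α * Var[H; μ] := by rw [variance_eq_sub hH]

theorem variance_reduction_tail_sampling_N_samples_general
    {Ω : Type*} [MeasurableSpace Ω] (μ : Measure Ω) [IsProbabilityMeasure μ]
    {A : Set Ω} {α : ℝ} (hα : α ∈ Set.Ioc (0 : ℝ) 1)
    (ν : Measure Ω) [IsProbabilityMeasure ν]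
    (hν : ν = (ENNReal.ofReal α)⁻¹ • μ.restrict A)
    (H : Ω → ℝ) (hH : MemLp H 2 μ) (hH0 : ∀ x ∉ A, H x = 0)
    {N : ℕ} :
    (∫ x, ((1 / N) * ∑ i : Fin N, α * H (x i)) ^ 2
          ∂(Measure.pi fun _ : Fin N => ν)) -
        (∫ x, (1 / N) * ∑ i : Fin N, α * H (x i)
          ∂(Measure.pi fun _ : Fin N => ν)) ^ 2 ≤
      α * ((∫ x, ((1 / N) * ∑ i : Fin N, H (x i)) ^ 2
              ∂(Measure.pi fun _ : Fin N => μ)) -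
            (∫ x, (1 / N) * ∑ i : Fin N, H (x i)
              ∂(Measure.pi fun _ : Fin N => μ)) ^ 2) := by
  have hHν : MemLp H 2 ν := hν ▸ hH.inv_smul_restrict A hα.1
  rw [integral_sq_sub_sq_integral_pi_sampleMean ν N (hHν.const_mul α),
    integral_sq_sub_sq_integral_pi_sampleMean μ N hH, mul_div_assoc']
  exact div_le_div_of_nonneg_right
    (variance_const_mul_le_of_eq_inv_smul_restrict μ hα ν hν hH hH0) N.cast_nonneg

/-- **Proposition 1 (N-sample form).** Let `μ` be a probability measure, `A`
measurable with `μ(A) = α`, `α ∈ (0,1]`, and let `ν = α⁻¹·(μ restricted to A)`,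
which is a probability measure. Let `H` be square-integrable w.r.t. `μ` and vanish
outside `A`, and let `N ≥ 1`. Then the variance under the product measure `ν^⊗N` of
the estimator `x ↦ (1/N)·∑ᵢ α·H(xᵢ)` is at most `α` times the variance under
`μ^⊗N` of the estimator `x ↦ (1/N)·∑ᵢ H(xᵢ)`, where the variance of `f` under a
probability measure `ρ` is `∫ f² dρ - (∫ f dρ)²`. -/
theorem variance_reduction_tail_sampling_N_samples
    {Ω : Type*} [MeasurableSpace Ω] (μ : Measure Ω) [IsProbabilityMeasure μ]
    {A : Set Ω} (hA : MeasurableSet A) {α : ℝ} (hα : α ∈ Set.Ioc (0 : ℝ) 1)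
    (hμA : μ A = ENNReal.ofReal α)
    (ν : Measure Ω) [IsProbabilityMeasure ν]
    (hν : ν = (ENNReal.ofReal α)⁻¹ • μ.restrict A)
    (H : Ω → ℝ) (hH : MemLp H 2 μ) (hH0 : ∀ x ∉ A, H x = 0)
    {N : ℕ} (hN : 1 ≤ N) :
    (∫ x, ((1 / N) * ∑ i : Fin N, α * H (x i)) ^ 2
          ∂(Measure.pi fun _ : Fin N => ν)) -
        (∫ x, (1 / N) * ∑ i : Fin N, α * H (x i)
          ∂(Measure.pi fun _ : Fin N => ν)) ^ 2 ≤
      α * ((∫ x, ((1 / N) * ∑ i : Fin N, H (x i)) ^ 2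
              ∂(Measure.pi fun _ : Fin N => μ)) -
            (∫ x, (1 / N) * ∑ i : Fin N, H (x i)
              ∂(Measure.pi fun _ : Fin N => μ)) ^ 2) :=
  variance_reduction_tail_sampling_N_samples_general μ hα ν hν H hH hH0
end
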